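/- Let p be a prime number and (A,+,∘) a left brace of cardinality p^n with p > n+1, and let a, b ∈ A. Then there exist integers γ_1, …, γ_{p−1} which depend only on the additive group (A,+) (not on a, b and not on the brace multiplication), with γ_1 = 1, such that [a*b] = Σ_{i=1}^{p−1} γ_i·[q_i(a,b)] in A/ann(p^2), where [q_1(a,b)] = [f(a)]⊙[b] and [q_{i+1}(a,b)] = [f(a)]⊙[q_i(a,b)]. -/

import Mathlib

universe u

/-- A left brace: `(A,+)` abelian group, `(A,∘)` a group, with
`a∘(b+c)+a = a∘b+a∘c`. -/
structure LeftBrace (A : Type u) [AddCommGroup A] where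
  circ : A → A → A
  one : A
  inv : A → A
  circ_assoc : ∀ a b c : A, circ (circ a b) c = circ a (circ b c)
  one_circ : ∀ a : A, circ one a = a
  circ_one : ∀ a : A, circ a one = a
  inv_circ : ∀ a : A, circ (inv a) a = one
  circ_add : ∀ a b c : A, circ a (b + c) + a = circ a b + circ a c

/-- `a*b = a∘b - a - b`. -/
def LeftBrace.star {A : Type u} [AddCommGroup A] (B : LeftBrace A) (a b : A) : A :=
  B.circ a b - a - b

/-- `ann(k) = {a : k•a = 0}`, as an additive subgroup. -/
def annSub (A : Type u) [AddCommGroup A] (k : ℕ) : AddSubgroup A where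
  carrier := {a : A | k • a = 0}
  zero_mem' := by simp
  add_mem' := by
    intro a b ha hb
    have ha' : k • a = 0 := ha
    have hb' : k • b = 0 := hb
    show k • (a + b) = 0
    rw [smul_add, ha', hb', add_zero]
  neg_mem' := by
    intro a ha
    have ha' : k • a = 0 := ha
    show k • (-a) = 0
    rw [smul_neg, ha', neg_zero]

/-- The coset `[a]` of `a` in `A/ann(k)`. -/
def qmk {A : Type u} [AddCommGroup A] (k : ℕ) (a : A) : A ⧸ annSub A k :=
  QuotientAddGroup.mk a

/-- Evaluation of a non-associative word under a binary operation `op`,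
substituting `f i` for the variable `i`. -/
def wEval {α : Type*} {β : Type*} (op : β → β → β) (f : α → β) : FreeMagma α → β
  | FreeMagma.of a => f a
  | FreeMagma.mul x y => op (wEval op f x) (wEval op f y)

/-- The list of leaves (occurrences of variables, left to right) of a word. -/
def wLeaves {α : Type*} : FreeMagma α → List α
  | FreeMagma.of a => [a]
  | FreeMagma.mul x y => wLeaves x ++ wLeaves y

/-- The last (rightmost) variable of a word. -/
def wLast {α : Type*} : FreeMagma α → α
  | FreeMagma.of a => a
  | FreeMagma.mul _ y => wLast y

/-- The number of occurrences of the variable `a` in a word. -/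
def wCount {α : Type*} [DecidableEq α] (a : α) : FreeMagma α → ℕ
  | FreeMagma.of b => if b = a then 1 else 0
  | FreeMagma.mul x y => wCount a x + wCount a y

/-- The length (number of variable occurrences) of a word. -/
def wLen {α : Type*} : FreeMagma α → ℕ
  | FreeMagma.of _ => 1
  | FreeMagma.mul x y => wLen x + wLen y

/-- Left-normed product `a₁·(a₂·(⋯(aₘ·b)⋯))`. -/
def leftProd {Q : Type*} (mul : Q → Q → Q) : List Q → Q → Q
  | [], b => b
  | a :: l, b => mul a (leftProd mul l b)

/-- `circPow B a k` is the product of `k` copies of `a` under `∘`. -/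
def circPow {A : Type u} [AddCommGroup A] (B : LeftBrace A) (a : A) : ℕ → A
  | 0 => B.one
  | k + 1 => B.circ a (circPow B a k)

/-- `eSeq B a (i-1)` is `a_i`, where `a_1 = a` and `a_{i+1} = a * a_i`. -/
def eSeq {A : Type u} [AddCommGroup A] (B : LeftBrace A) (a : A) : ℕ → A
  | 0 => a
  | i + 1 => B.star a (eSeq B a i)

/-- `starIter B a b (i-1)` is `e_i`, where `e_1 = a*b` and `e_{i+1} = a*e_i`. -/
def starIter {A : Type u} [AddCommGroup A] (B : LeftBrace A) (a b : A) : ℕ → A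
  | 0 => B.star a b
  | i + 1 => B.star a (starIter B a b i)

/-- `iterOp op u v i` is `u ⊙ (u ⊙ (⋯ (u ⊙ v)))` with `i` applications of `u ⊙ ·`. -/
def iterOp {Q : Type*} (op : Q → Q → Q) (u v : Q) : ℕ → Q
  | 0 => v
  | i + 1 => op u (iterOp op u v i)

/-- `f(a) = Σ_{i=1}^{p−1} (C(p−1,i−1)/i)·e_i` where `e_1 = a`, `e_{i+1} = a*e_i`. -/
def fMap {A : Type u} [AddCommGroup A] (B : LeftBrace A) (p : ℕ) (a : A) : A :=
  ∑ i ∈ Finset.Icc 1 (p - 1), (Nat.choose (p - 1) (i - 1) / i) • eSeq B a (i - 1)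

/-- `braceChainAux B (i-1)` is `A^i`: `A^1 = A`, `A^{i+1}` the additive subgroup
generated by `{x*y : x ∈ A, y ∈ A^i}`. -/
def braceChainAux {A : Type u} [AddCommGroup A] (B : LeftBrace A) : ℕ → AddSubgroup A
  | 0 => ⊤
  | i + 1 => AddSubgroup.closure {z : A | ∃ x : A, ∃ y ∈ braceChainAux B i, z = B.star x y}

/-- `dSeq B a b i = (d_i, d_i')`: `d_0 = a`, `d_0' = b`, `d_{i+1} = d_i + d_i'`,
`d_{i+1}' = d_i * d_i'`. -/
def dSeq {A : Type u} [AddCommGroup A] (B : LeftBrace A) (a b : A) : ℕ → A × A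
  | 0 => (a, b)
  | i + 1 => ((dSeq B a b i).1 + (dSeq B a b i).2, B.star (dSeq B a b i).1 (dSeq B a b i).2)

/-! The map `λ_a x = a ∘ x - a` is an additive automorphism with `λ_{a∘b} = λ_a λ_b`, and
`σ = λ_a - 1` is `x ↦ a * x`. As `λ_a` has `p`-power order on a group of order `p ^ n`, `σ` is
nilpotent, so `σ ^ n = 0` and hence `σ ^ (p - 1) = 0`. Writing everything as polynomials in `σ`:
`e_i = σ ^ (i - 1) a`, and the binomial identities give `p • f(a) = a^{∘p}`, hence
`(p • f(a)) * x = (λ_a ^ p - 1) x = p • τ(σ) x` with `τ = X * fMapPoly p = X + ⋯`.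
So `[f(a)] ⊙ [x] = [τ(σ) x]`, and inverting the power series `τ` modulo `X ^ p` expresses
`σ = Σ γ_j τ(σ) ^ j` with integers `γ_j`, `γ_1 = 1`, that depend only on `p`. -/

open Polynomial

namespace Polynomial

variable {R : Type*} [CommRing R]

theorem exists_X_pow_dvd_X_sub_sum_smul_pow {q : R[X]} (hq : q.coeff 0 = 1) {M : ℕ}
    (hM : 1 ≤ M) :
    ∃ γ : ℕ → R, γ 1 = 1 ∧ X ^ (M + 1) ∣ X - ∑ j ∈ Finset.Icc 1 M, γ j • (X * q) ^ j := by
  induction M, hM using Nat.le_induction with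
  | base =>
    refine ⟨fun _ => 1, rfl, ?_⟩
    have hX : X ∣ 1 - q := X_dvd_iff.mpr (by simp [hq])
    simpa [pow_two, mul_sub] using mul_dvd_mul_left X hX
  | succ M hM ih =>
    obtain ⟨γ, hγ1, s, hs⟩ := ih
    refine ⟨Function.update γ (M + 1) (s.coeff 0), ?_, ?_⟩
    · rw [Function.update_of_ne (by omega), hγ1]
    have hsum : ∑ j ∈ Finset.Icc 1 M, Function.update γ (M + 1) (s.coeff 0) j • (X * q) ^ j
        = ∑ j ∈ Finset.Icc 1 M, γ j • (X * q) ^ j :=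
      Finset.sum_congr rfl fun j hj => by
        rw [Function.update_of_ne (by have := (Finset.mem_Icc.mp hj).2; omega)]
    have hrest : X ∣ s - s.coeff 0 • q ^ (M + 1) := by
      rw [X_dvd_iff, coeff_sub, coeff_smul, coeff_zero_eq_eval_zero (q ^ _), eval_pow,
        ← coeff_zero_eq_eval_zero, hq]
      simp
    rw [Finset.sum_Icc_succ_top (by omega), hsum, Function.update_self, ← sub_sub, hs,
      mul_pow, ← mul_smul_comm, pow_succ X (M + 1), ← mul_sub]
    exact mul_dvd_mul_left _ hrest

theorem aeval_eq_of_X_pow_dvd_sub {S : Type*} [Ring S] [Algebra R S] {x : S} {N : ℕ}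
    (hx : x ^ N = 0) {P Q : R[X]} (h : X ^ N ∣ P - Q) : aeval x P = aeval x Q := by
  obtain ⟨r, hr⟩ := h
  rw [← sub_eq_zero, ← map_sub, hr, map_mul, map_pow, aeval_X, hx, zero_mul]

end Polynomial

/-- `(x - 1) ^ p ^ m ≡ x ^ p ^ m - 1 = 0` modulo `p`. -/
theorem isNilpotent_sub_one_of_pow_prime_pow_eq_one {R : Type*} [Ring R] {p : ℕ} (hp : p.Prime)
    (hpR : IsNilpotent (p : R)) {x : R} {m : ℕ} (hx : x ^ p ^ m = 1) : IsNilpotent (x - 1) := by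
  obtain ⟨r, hr⟩ := (Commute.one_right (x - 1)).exists_add_pow_prime_pow_eq hp m
  rw [sub_add_cancel, hx, one_pow, mul_one, add_right_comm, eq_comm, add_eq_right] at hr
  have hpow : (x - 1) ^ p ^ m = p * -((x - 1) * r) := by
    rw [mul_neg, ← mul_assoc]; exact eq_neg_of_add_eq_zero_left hr
  obtain ⟨N, hN⟩ := hpR
  refine ⟨p ^ m * N, ?_⟩
  rw [pow_mul, hpow, (Nat.cast_commute p _).mul_pow, hN, zero_mul]

theorem Module.End.range_pow_eq_bot_of_range_pow_succ_eq {M : Type*} [AddCommGroup M]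
    {f : Module.End ℤ M} (hf : IsNilpotent f) {j : ℕ}
    (h : LinearMap.range (f ^ (j + 1)) = LinearMap.range (f ^ j)) :
    LinearMap.range (f ^ j) = ⊥ := by
  have hmap : ∀ i, LinearMap.range (f ^ (i + 1)) = (LinearMap.range (f ^ i)).map f := fun i => by
    rw [pow_succ', Module.End.mul_eq_comp, LinearMap.range_comp]
  have hconst : ∀ i, LinearMap.range (f ^ (j + i)) = LinearMap.range (f ^ j) := by
    intro i
    induction i with
    | zero => rfl
    | succ i ih => rw [← add_assoc, hmap, ih, ← hmap, h]
  obtain ⟨N, hN⟩ := hf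
  rw [← hconst N, pow_add, hN, mul_zero, LinearMap.range_zero]

/-- The ranges of `f ^ j` decrease strictly until they vanish, and each strict step divides the
order by at least `p`. -/
theorem Module.End.pow_eq_zero_of_card_eq_prime_pow {M : Type*} [AddCommGroup M] {p k : ℕ}
    (hp : p.Prime) (hM : Nat.card M = p ^ k) {f : Module.End ℤ M} (hf : IsNilpotent f) :
    f ^ k = 0 := by
  have : Finite M := Nat.finite_of_card_ne_zero (by simp [hM, hp.ne_zero])
  set R : ℕ → AddSubgroup M := fun j => (LinearMap.range (f ^ j)).toAddSubgroup with hR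
  have hmono : ∀ j, R (j + 1) ≤ R j := fun j => by
    simp only [hR, Submodule.toAddSubgroup_le]
    rw [pow_succ, Module.End.mul_eq_comp]
    exact LinearMap.range_comp_le_range _ _
  have hstable : ∀ j, R (j + 1) = R j → R j = ⊥ := fun j h => by
    simp only [hR, Submodule.toAddSubgroup_inj] at h ⊢
    rw [range_pow_eq_bot_of_range_pow_succ_eq hf h, Submodule.bot_toAddSubgroup]
  have hcard : ∀ j ≤ k, Nat.card (R j) ∣ p ^ (k - j) := by
    intro j
    induction j with
    | zero => simpa [hM] using AddSubgroup.card_dvd_of_le (le_top : R 0 ≤ ⊤)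
    | succ j ih =>
      intro hj
      obtain ⟨e, he, hRj⟩ := (Nat.dvd_prime_pow hp).1 (ih (by omega))
      obtain ⟨e', he', hRj'⟩ :=
        (Nat.dvd_prime_pow hp).1 (hRj ▸ AddSubgroup.card_dvd_of_le (hmono j))
      rcases he'.lt_or_eq with hlt | rfl
      · rw [hRj']
        exact pow_dvd_pow p (by omega)
      · have hbot : R (j + 1) = ⊥ := by
          rw [← le_bot_iff, ← hstable j (AddSubgroup.eq_of_le_of_card_ge (hmono j) (by omega))]
          exact hmono j
        simp [hbot]
  have hk : R k = ⊥ := AddSubgroup.card_eq_one.mp (by simpa using hcard k le_rfl)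
  rwa [hR, ← Submodule.bot_toAddSubgroup (R := ℤ), Submodule.toAddSubgroup_inj,
    LinearMap.range_eq_bot] at hk

theorem Nat.Prime.mul_choose_sub_one_div_eq_choose {p i : ℕ} (hp : p.Prime) (hi : 0 < i)
    (hip : i < p) : p * ((p - 1).choose (i - 1) / i) = p.choose i := by
  have hmul : p * (p - 1).choose (i - 1) = p.choose i * i := by
    simpa [Nat.sub_add_cancel hp.one_le, Nat.sub_add_cancel hi] using
      Nat.add_one_mul_choose_eq (p - 1) (i - 1)
  have hdvd : i ∣ (p - 1).choose (i - 1) :=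
    (Nat.coprime_of_lt_prime hi.ne' hip hp).symm.dvd_of_dvd_mul_left (hmul ▸ dvd_mul_left i _)
  rw [← Nat.mul_div_assoc p hdvd, hmul, Nat.mul_div_cancel _ hi]

noncomputable def fMapPoly (p : ℕ) : ℤ[X] :=
  ∑ i ∈ Finset.Icc 1 (p - 1), ((p - 1).choose (i - 1) / i) • X ^ (i - 1)

theorem fMapPoly_coeff_zero {p : ℕ} (hp : 2 ≤ p) : (fMapPoly p).coeff 0 = 1 := by
  rw [fMapPoly, finsetSum_coeff, Finset.sum_eq_single 1]
  · simp
  · intro i hi hne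
    rw [coeff_smul, coeff_X_pow, if_neg (by have := (Finset.mem_Icc.mp hi).1; omega), smul_zero]
  · intro h; exact absurd (Finset.mem_Icc.mpr ⟨le_rfl, by omega⟩) h

theorem nsmul_fMapPoly_add_X_pow {p : ℕ} (hp : p.Prime) :
    p • fMapPoly p + X ^ (p - 1) = (∑ i ∈ Finset.range p, (X : ℤ[X]) ^ i).comp (X + 1) := by
  have hp1 : p - 1 + 1 = p := Nat.sub_add_cancel hp.one_le
  rw [geom_sum_X_comp_X_add_one_eq_sum, ← hp1, Finset.sum_range_succ, hp1, Nat.choose_self,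
    Nat.cast_one, one_mul, fMapPoly, Finset.smul_sum]
  congr 1
  rw [← Finset.Ico_add_one_right_eq_Icc, hp1, Finset.sum_Ico_eq_sum_range]
  refine Finset.sum_congr rfl fun i hi => ?_
  rw [Finset.mem_range] at hi
  rw [smul_smul, add_comm 1 i, hp.mul_choose_sub_one_div_eq_choose (by omega) (by omega),
    Nat.add_sub_cancel, nsmul_eq_mul]

theorem nsmul_X_mul_fMapPoly_add_X_pow {p : ℕ} (hp : p.Prime) :
    p • (X * fMapPoly p) + X ^ p = (X + 1) ^ p - 1 := by
  have hgeom := congrArg (·.comp (X + 1)) (geom_sum_mul (X : ℤ[X]) p)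
  simp only [mul_comp, sub_comp, X_comp, one_comp, X_pow_comp, add_sub_cancel_right] at hgeom
  rw [← hgeom, ← nsmul_fMapPoly_add_X_pow hp, add_mul, smul_mul_assoc, ← pow_succ,
    Nat.sub_add_cancel hp.one_le, mul_comm]

namespace LeftBrace

variable {A : Type u} [AddCommGroup A] (B : LeftBrace A)

/-- `A` with the group law `∘`, kept apart from `(A, +)`. -/
def Circ (_B : LeftBrace A) : Type u := A

instance : Group B.Circ :=
  @Group.ofLeftAxioms B.Circ ⟨B.circ⟩ ⟨B.inv⟩ ⟨B.one⟩ B.circ_assoc B.one_circ B.inv_circ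

theorem circPow_card (a : A) : circPow B a (Nat.card A) = B.one := by
  have hpow : ∀ k, circPow B a k = (show B.Circ from a) ^ k := fun k => by
    induction k with
    | zero => rfl
    | succ k ih => rw [pow_succ', ← ih]; rfl
  rw [hpow]
  exact pow_card_eq_one' (G := B.Circ)

theorem one_eq_zero : B.one = 0 := by
  simpa [B.one_circ] using B.circ_add B.one 0 0

def lam (a : A) : Module.End ℤ A :=
  AddMonoidHom.toIntLinearMap
    { toFun := fun x => B.circ a x - a
      map_zero' := sub_eq_zero.mpr (by simpa using (B.circ_add a 0 0).symm)
      map_add' := fun x y => by rw [eq_sub_of_add_eq (B.circ_add a x y)]; abel }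

theorem lam_apply (a x : A) : B.lam a x = B.circ a x - a := rfl

theorem lam_one : B.lam B.one = 1 := by
  ext x
  rw [lam_apply, B.one_circ, B.one_eq_zero, sub_zero, Module.End.one_apply]

theorem lam_circ (a b : A) : B.lam (B.circ a b) = B.lam a * B.lam b := by
  ext x
  calc B.lam (B.circ a b) x = B.circ a (B.circ b x) - B.circ a b := by
        rw [lam_apply, B.circ_assoc]
    _ = B.lam a (B.circ b x) - B.lam a b := by rw [lam_apply, lam_apply]; abel
    _ = (B.lam a * B.lam b) x := by rw [← map_sub, Module.End.mul_apply, B.lam_apply b]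

theorem star_eq_lam_sub_one_apply (a x : A) : B.star a x = (B.lam a - 1) x := by
  rw [LinearMap.sub_apply, lam_apply, Module.End.one_apply, star]

theorem lam_circPow (a : A) (k : ℕ) : B.lam (circPow B a k) = B.lam a ^ k := by
  induction k with
  | zero => exact B.lam_one
  | succ k ih => rw [pow_succ', ← ih, ← lam_circ]; rfl

theorem circPow_eq_sum_lam_pow (a : A) (k : ℕ) :
    circPow B a k = ∑ i ∈ Finset.range k, (B.lam a ^ i) a := by
  induction k with
  | zero => exact B.one_eq_zero
  | succ k ih =>
    rw [Finset.sum_range_succ', pow_zero, Module.End.one_apply]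
    simp only [pow_succ', Module.End.mul_apply]
    rw [← map_sum, ← ih, lam_apply]
    show B.circ a (circPow B a k) = _
    abel

theorem eSeq_eq_pow_apply (a : A) (i : ℕ) : eSeq B a i = ((B.lam a - 1) ^ i) a := by
  induction i with
  | zero => rfl
  | succ i ih => rw [pow_succ', Module.End.mul_apply, ← ih, ← star_eq_lam_sub_one_apply]; rfl

theorem lam_sub_one_pow_eq_zero {p n : ℕ} (hp : p.Prime) (hA : Nat.card A = p ^ n) (a : A) :
    (B.lam a - 1) ^ n = 0 := by
  have hpA : ((p : Module.End ℤ A)) ^ n = 0 := by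
    ext x
    rw [← Nat.cast_pow, ← hA, Module.End.natCast_apply, card_nsmul_eq_zero',
      LinearMap.zero_apply]
  have hord : B.lam a ^ p ^ n = 1 := by rw [← hA, ← lam_circPow, circPow_card, lam_one]
  exact Module.End.pow_eq_zero_of_card_eq_prime_pow hp hA
    (isNilpotent_sub_one_of_pow_prime_pow_eq_one hp ⟨n, hpA⟩ hord)

theorem fMap_eq_aeval (p : ℕ) (a : A) : fMap B p a = aeval (B.lam a - 1) (fMapPoly p) a := by
  simp only [fMap, fMapPoly, map_sum, map_nsmul, map_pow, aeval_X, LinearMap.sum_apply,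
    LinearMap.smul_apply, eSeq_eq_pow_apply]

theorem nsmul_fMap_eq_circPow {p : ℕ} (hp : p.Prime) {a : A}
    (hσ : (B.lam a - 1) ^ (p - 1) = 0) : p • fMap B p a = circPow B a p := by
  have h := congrArg (aeval (B.lam a - 1)) (nsmul_fMapPoly_add_X_pow hp)
  simp only [map_add, map_nsmul, map_pow, aeval_X, hσ, add_zero, aeval_comp, map_one,
    sub_add_cancel, map_sum] at h
  rw [fMap_eq_aeval, ← LinearMap.smul_apply, h, circPow_eq_sum_lam_pow, LinearMap.sum_apply]

theorem star_nsmul_fMap_eq_nsmul_aeval {p : ℕ} (hp : p.Prime) {a : A}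
    (hσ : (B.lam a - 1) ^ (p - 1) = 0) (x : A) :
    B.star (p • fMap B p a) x = p • aeval (B.lam a - 1) (X * fMapPoly p) x := by
  have hσp : (B.lam a - 1) ^ p = 0 := pow_eq_zero_of_le (Nat.sub_le p 1) hσ
  have h := congrArg (aeval (B.lam a - 1)) (nsmul_X_mul_fMapPoly_add_X_pow hp)
  simp only [map_add, map_nsmul, map_pow, aeval_X, hσp, add_zero, map_sub, map_one,
    sub_add_cancel] at h
  rw [star_eq_lam_sub_one_apply, nsmul_fMap_eq_circPow B hp hσ, lam_circPow, ← h,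
    LinearMap.smul_apply]

end LeftBrace

theorem iterOp_qmk_eq_pow_apply {A : Type u} [AddCommGroup A] {k : ℕ}
    (op : A ⧸ annSub A k → A ⧸ annSub A k → A ⧸ annSub A k) (T : Module.End ℤ A)
    {u : A ⧸ annSub A k} (hT : ∀ x, op u (qmk k x) = qmk k (T x)) (b : A) (j : ℕ) :
    iterOp op u (qmk k b) j = qmk k ((T ^ j) b) := by
  induction j with
  | zero => rfl
  | succ j ih => rw [iterOp, ih, hT, pow_succ', Module.End.mul_apply]

/-- there are integers `γ_1,…,γ_{p−1}` depending only on the additive group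
`(A,+)`, with `γ_1 = 1`, such that `[a*b] = Σ_{i=1}^{p−1} γ_i·[q_i(a,b)]` in `A/ann(p²)`,
where `[q_1(a,b)] = [f(a)]⊙[b]` and `[q_{i+1}(a,b)] = [f(a)]⊙[q_i(a,b)]`. -/
theorem stmt_6 (p n : ℕ) (hp : p.Prime) (hpn : n + 1 < p)
    (A : Type u) [AddCommGroup A] (hcard : Nat.card A = p ^ n) :
    ∃ g : ℕ → ℤ, g 1 = 1 ∧
      ∀ (B : LeftBrace A)
        (odot : (A ⧸ annSub A (p ^ 2)) → (A ⧸ annSub A (p ^ 2)) → (A ⧸ annSub A (p ^ 2))),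
        (∀ a b c : A, p • c = B.star (p • a) b →
          odot (qmk (p ^ 2) a) (qmk (p ^ 2) b) = qmk (p ^ 2) c) →
        ∀ a b : A,
          qmk (p ^ 2) (B.star a b) = ∑ i ∈ Finset.Icc 1 (p - 1),
            g i • iterOp odot (qmk (p ^ 2) (fMap B p a)) (qmk (p ^ 2) b) i := by
  obtain ⟨γ, hγ1, hdvd⟩ :=
    exists_X_pow_dvd_X_sub_sum_smul_pow (fMapPoly_coeff_zero hp.two_le) (M := p - 1) (by omega)
  refine ⟨γ, hγ1, fun B odot hodot a b => ?_⟩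
  set σ := B.lam a - 1
  set T := aeval σ (X * fMapPoly p)
  have hσ : σ ^ (p - 1) = 0 :=
    pow_eq_zero_of_le (by omega) (B.lam_sub_one_pow_eq_zero hp hcard a)
  have hT : ∀ x, odot (qmk (p ^ 2) (fMap B p a)) (qmk (p ^ 2) x) = qmk (p ^ 2) (T x) :=
    fun x => hodot _ _ _ (B.star_nsmul_fMap_eq_nsmul_aeval hp hσ x).symm
  have hσT : σ = ∑ j ∈ Finset.Icc 1 (p - 1), γ j • T ^ j := by
    simpa only [aeval_X, map_sum, map_zsmul, map_pow] using
      aeval_eq_of_X_pow_dvd_sub (x := σ) (pow_eq_zero_of_le (by omega) hσ) hdvd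
  calc qmk (p ^ 2) (B.star a b) = qmk (p ^ 2) (σ b) := by rw [B.star_eq_lam_sub_one_apply]
    _ = ∑ j ∈ Finset.Icc 1 (p - 1), γ j • qmk (p ^ 2) ((T ^ j) b) := by
      rw [hσT]
      simp [qmk, QuotientAddGroup.mk_sum, QuotientAddGroup.mk_zsmul]
    _ = _ := by simp only [iterOp_qmk_eq_pow_apply odot T hT]
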